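/- Let M = (S, Act, P) be an MDP with RelReach data (m, n, q₁,…,q_m, q, s₁,…,s_m, k, T₁,…,T_m). Let v^max (resp. v^min) be the supremum (resp. infimum) over all tuples (σ₁,…,σₙ) of schedulers for M of Σ_{i=1}^m qᵢ · Pr^{M,σ_{k(i)}}_{sᵢ}(◇Tᵢ). Then v^max and v^min are each attained by some tuple of schedulers, and for every rational ε ≥ 0: there exist schedulers σ₁,…,σₙ for M with |Σ_{i=1}^m qᵢ · Pr^{M,σ_{k(i)}}_{sᵢ}(◇Tᵢ) − q| ≤ ε if and only if v^min − ε ≤ q ≤ v^max + ε. -/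

import Mathlib

open scoped Classical
open Filter

noncomputable section

/-- A Markov decision process with state space `S` and action space `A`. -/
structure MDP (S A : Type) where
  P : S → A → S → ℝ
  nonneg : ∀ s a s', 0 ≤ P s a s'
  le_one : ∀ s a s', P s a s' ≤ 1
  exists_enabled : ∀ s : S, ∃ a : A, (∑' s', P s a s') = 1
  zero_of_not_enabled : ∀ (s : S) (a : A), (∑' s', P s a s') ≠ 1 → (∑' s', P s a s') = 0

namespace MDP

variable {S A : Type}

/-- Action `a` is enabled in state `s`. -/
def Enabled (M : MDP S A) (s : S) (a : A) : Prop := (∑' s', M.P s a s') = 1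

/-- `s` is an absorbing state. -/
def AbsorbingState (M : MDP S A) (s : S) : Prop := ∀ a : A, M.Enabled s a → M.P s a s = 1

/-- An absorbing set of states: all its elements are absorbing. -/
def AbsorbingSet (M : MDP S A) (T : Set S) : Prop := ∀ s ∈ T, M.AbsorbingState s

end MDP

/-- A finite path: an initial state together with a list of (action, next state) steps. -/
abbrev FPath (S A : Type) : Type := S × List (A × S)

/-- The last state of a finite path. -/
def fpLast {S A : Type} (p : FPath S A) : S := ((p.2.map Prod.snd).getLast?).getD p.1

/-- Extending a finite path by one step. -/
def fpExt {S A : Type} (p : FPath S A) (a : A) (s' : S) : FPath S A := (p.1, p.2 ++ [(a, s')])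

/-- A (history-dependent, randomized) scheduler for the MDP `M`. -/
structure Scheduler {S A : Type} (M : MDP S A) where
  act : FPath S A → A → ℝ
  nonneg : ∀ p a, 0 ≤ act p a
  sum_one : ∀ p, (∑' a, act p a) = 1
  not_enabled : ∀ p a, ¬ M.Enabled (fpLast p) a → act p a = 0

namespace Scheduler

variable {S A : Type} {M : MDP S A}

/-- A memoryless scheduler depends only on the last state of the path. -/
def Memoryless (σ : Scheduler M) : Prop :=
  ∀ p : FPath S A, σ.act p = σ.act (fpLast p, ([] : List (A × S)))

/-- A deterministic scheduler chooses a Dirac distribution on every path. -/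
def Deterministic (σ : Scheduler M) : Prop := ∀ p : FPath S A, ∃ a : A, σ.act p a = 1

/-- A memoryless deterministic (MD) scheduler. -/
def MD (σ : Scheduler M) : Prop := σ.Memoryless ∧ σ.Deterministic

end Scheduler

/-- One-step expectation operator: expected value of `g` after one step from `p`. -/
def stepExp {S A : Type} (M : MDP S A) (σ : Scheduler M) (p : FPath S A)
    (g : FPath S A → ℝ) : ℝ :=
  ∑' a : A, ∑' s' : S, σ.act p a * M.P (fpLast p) a s' * g (fpExt p a s')

/-- Probability of visiting `T` within `n` further steps, continuing the finite path `p`. -/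
def reachN {S A : Type} (M : MDP S A) (σ : Scheduler M) (T : Set S) :
    ℕ → FPath S A → ℝ
  | 0, p => if fpLast p ∈ T then 1 else 0
  | n + 1, p => if fpLast p ∈ T then 1 else stepExp M σ p (reachN M σ T n)

/-- Reachability probability `Pr^{M,σ}_s(◇T)`. -/
def reachProb {S A : Type} (M : MDP S A) (σ : Scheduler M) (s : S) (T : Set S) : ℝ :=
  ⨆ n : ℕ, reachN M σ T n (s, [])

/-- Probability of visiting `T` at some time `≥ j` within `j + n` steps, from path `p`. -/
def reachAfterN {S A : Type} (M : MDP S A) (σ : Scheduler M) (T : Set S) :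
    ℕ → ℕ → FPath S A → ℝ
  | 0, n, p => reachN M σ T n p
  | j + 1, n, p => stepExp M σ p (fun p' => reachAfterN M σ T j n p')

/-- Büchi probability `Pr^{M,σ}_s(□◇T)`: the probability of visiting `T` infinitely often. -/
def buchiProb {S A : Type} (M : MDP S A) (σ : Scheduler M) (s : S) (T : Set S) : ℝ :=
  ⨅ j : ℕ, ⨆ n : ℕ, reachAfterN M σ T j n (s, [])

/-- Expected sum of the rewards of the first `n+1` states (counting the current one). -/
def expRewN {S A : Type} (M : MDP S A) (σ : Scheduler M) (R : S → ℝ) :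
    ℕ → FPath S A → ℝ
  | 0, p => R (fpLast p)
  | n + 1, p => R (fpLast p) + stepExp M σ p (fun p' => expRewN M σ R n p')

/-- Expected total reward `E^{M,σ}_s(R)`. -/
def expTotalReward {S A : Type} (M : MDP S A) (σ : Scheduler M) (R : S → ℝ) (s : S) : ℝ :=
  limUnder atTop (fun n => expRewN M σ R n (s, []))

end

/-!
For one scheduler `σ` and weights `q`, the objective `∑ i, q i * Pr^σ_{s_i}(◇T_i)` is a total-reward
problem on the product of the MDP with the memory "set of targets not yet visited". With a discount
`γ < 1` its Bellman operator is a contraction, and the deterministic scheduler that is greedy for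
the fixed point is optimal. There are only finitely many such finite-memory schedulers, so one of
them is optimal for discounts arbitrarily close to `1`, hence for the undiscounted objective. The
objective of a tuple of schedulers splits into independent problems of this kind along the fibres
of `k`, so both extrema are attained.

Following `σ₀` with probability `1 - t` and `σ₁` with probability `t` is again a scheduler (it
randomizes according to the posterior of the two given the history), and its reachability
probabilities are affine in `t`. Hence every value between the extrema is attained, and the
`ε`-condition says that `q` lies within `ε` of the interval `[v^min, v^max]`.
-/

open Topology

noncomputable section

lemma Finset.abs_sup'_sub_sup'_le {α : Type} {s : Finset α} (hs : s.Nonempty) {f g : α → ℝ}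
    {c : ℝ} (h : ∀ a ∈ s, |f a - g a| ≤ c) : |s.sup' hs f - s.sup' hs g| ≤ c := by
  have key : ∀ f g : α → ℝ, (∀ a ∈ s, f a - g a ≤ c) → s.sup' hs f - s.sup' hs g ≤ c :=
    fun f g h => sub_le_iff_le_add.2 <| Finset.sup'_le _ _ fun a ha =>
      (sub_le_iff_le_add.1 (h a ha)).trans (add_le_add_right (Finset.le_sup' g ha) c)
  exact abs_sub_le_iff.2 ⟨key f g fun a ha => (abs_le.1 (h a ha)).2,
    key g f fun a ha => by linarith [(abs_le.1 (h a ha)).1]⟩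

lemma exists_abs_sub_le_iff_of_Icc_subset_range {X : Type*} (f : X → ℝ) {a b : X}
    (ha : ∀ x, f a ≤ f x) (hb : ∀ x, f x ≤ f b) (hab : Set.Icc (f a) (f b) ⊆ Set.range f)
    {q ε : ℝ} (hε : 0 ≤ ε) :
    (∃ x, |f x - q| ≤ ε) ↔ f a - ε ≤ q ∧ q ≤ f b + ε := by
  constructor
  · rintro ⟨x, hx⟩
    obtain ⟨h₁, h₂⟩ := abs_le.1 hx
    exact ⟨by linarith [ha x], by linarith [hb x]⟩
  · rintro ⟨h₁, h₂⟩
    -- the point of `[f a, f b]` closest to `q`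
    obtain ⟨x, hx⟩ := hab ⟨le_max_left (f a) (min q (f b)),
      max_le (ha b) (min_le_right _ _)⟩
    refine ⟨x, abs_le.2 ⟨?_, ?_⟩⟩ <;> rw [hx] <;>
      cases le_total q (f b) <;> cases le_total (f a) q <;> simp [*] <;> linarith

section Paths

variable {S A : Type}

@[simp]
lemma fpLast_fpExt (p : FPath S A) (a : A) (s' : S) : fpLast (fpExt p a s') = s' := by
  simp [fpLast, fpExt]

@[simp]
lemma fpLast_nil (s : S) : fpLast ((s, []) : FPath S A) = s := rfl

def pathStates (p : FPath S A) : List S := p.1 :: p.2.map Prod.snd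

lemma pathStates_fpExt (p : FPath S A) (a : A) (s' : S) :
    pathStates (fpExt p a s') = pathStates p ++ [s'] := by
  simp [pathStates, fpExt]

section Pending

variable {ι : Type} [Fintype ι] (T : ι → Set S)

def hitSet (s : S) : Finset ι := {i | s ∈ T i}

def pending (J : Finset ι) (p : FPath S A) : Finset ι := {i ∈ J | ∀ s ∈ pathStates p, s ∉ T i}

lemma pending_nil (J : Finset ι) (s : S) : pending T J ((s, []) : FPath S A) = J \ hitSet T s := by
  ext i
  simp [pending, hitSet, pathStates]

lemma pending_fpExt (J : Finset ι) (p : FPath S A) (a : A) (s' : S) :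
    pending T J (fpExt p a s') = pending T J p \ hitSet T s' := by
  ext i
  simp only [pending, hitSet, pathStates_fpExt, Finset.mem_sdiff, Finset.mem_filter,
    Finset.mem_univ, true_and, List.forall_mem_append, List.forall_mem_singleton, and_assoc]

end Pending

end Paths

section PathWeight

variable {S A : Type} {M : MDP S A} (σ σ₀ σ₁ : Scheduler M)

/-- `histWeight σ s acc l` is the probability that `σ`, after the history `(s, acc)`, picks the
actions of the steps `l`. -/
def histWeight (s : S) : List (A × S) → List (A × S) → ℝ
  | _, [] => 1
  | acc, x :: l => σ.act (s, acc) x.1 * histWeight s (acc ++ [x]) l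

def pathWeight (p : FPath S A) : ℝ := histWeight σ p.1 [] p.2

lemma histWeight_append_singleton (s : S) (x : A × S) :
    ∀ l acc, histWeight σ s acc (l ++ [x]) = histWeight σ s acc l * σ.act (s, acc ++ l) x.1
  | [], acc => by simp [histWeight]
  | y :: l, acc => by simp [histWeight, histWeight_append_singleton s x l, mul_assoc]

lemma histWeight_nonneg (s : S) : ∀ l acc, 0 ≤ histWeight σ s acc l
  | [], _ => zero_le_one
  | _ :: l, _ => mul_nonneg (σ.nonneg _ _) (histWeight_nonneg s l _)

lemma pathWeight_nonneg (p : FPath S A) : 0 ≤ pathWeight σ p := histWeight_nonneg σ _ _ _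

@[simp]
lemma pathWeight_nil (s : S) : pathWeight σ (s, []) = 1 := rfl

lemma pathWeight_fpExt (p : FPath S A) (a : A) (s' : S) :
    pathWeight σ (fpExt p a s') = pathWeight σ p * σ.act p a := by
  simp [pathWeight, fpExt, histWeight_append_singleton]

def mixWeight (t : ℝ) (p : FPath S A) : ℝ := (1 - t) * pathWeight σ₀ p + t * pathWeight σ₁ p

end PathWeight

section Discounted

variable {S A : Type} {M : MDP S A} (σ : Scheduler M)

/-- The discounted reachability probability `E[γ ^ (time of the first visit to T)]` truncated at
horizon `n`. -/
def discReachN (T : Set S) (γ : ℝ) : ℕ → FPath S A → ℝ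
  | 0, p => if fpLast p ∈ T then 1 else 0
  | n + 1, p => if fpLast p ∈ T then 1 else γ * stepExp M σ p (discReachN T γ n)

def discReach (T : Set S) (γ : ℝ) (p : FPath S A) : ℝ := ⨆ n, discReachN σ T γ n p

variable {ι : Type} (T : ι → Set S) (q : ι → ℝ)

def discValueN (σ : Scheduler M) (γ : ℝ) (n : ℕ) (J : Finset ι) (p : FPath S A) : ℝ :=
  ∑ i ∈ J, q i * discReachN σ (T i) γ n p

def discValue (σ : Scheduler M) (γ : ℝ) (J : Finset ι) (p : FPath S A) : ℝ :=
  ∑ i ∈ J, q i * discReach σ (T i) γ p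

lemma discValueN_zero [Fintype ι] (σ : Scheduler M) (γ : ℝ) (J : Finset ι) (p : FPath S A) :
    discValueN T q σ γ 0 J p = ∑ i ∈ J ∩ hitSet T (fpLast p), q i := by
  simp only [discValueN, discReachN, mul_ite, mul_one, mul_zero, ← Finset.sum_filter]
  congr 1
  ext i
  simp [hitSet]

end Discounted

variable {S A : Type} {M : MDP S A}

lemma MDP.sum_P_eq_one [Fintype S] {s : S} {a : A} (h : M.Enabled s a) : ∑ s', M.P s a s' = 1 := by
  rwa [MDP.Enabled, tsum_fintype] at h

lemma MDP.sum_P_mul_le [Fintype S] {s : S} {a : A} (ha : M.Enabled s a) {f : S → ℝ} {c : ℝ}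
    (h : ∀ s', f s' ≤ c) : ∑ s', M.P s a s' * f s' ≤ c :=
  calc _ ≤ ∑ s', M.P s a s' * c := Finset.sum_le_sum fun s' _ =>
        mul_le_mul_of_nonneg_left (h s') (M.nonneg _ _ _)
    _ = c := by rw [← Finset.sum_mul, M.sum_P_eq_one ha, one_mul]

lemma MDP.sum_P_mul_add [Fintype S] {s : S} {a : A} (ha : M.Enabled s a) (f : S → ℝ) (c : ℝ) :
    ∑ s', M.P s a s' * (f s' + c) = ∑ s', M.P s a s' * f s' + c := by
  simp only [mul_add, Finset.sum_add_distrib, ← Finset.sum_mul, M.sum_P_eq_one ha, one_mul]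

lemma MDP.abs_sum_P_mul_sub_le [Fintype S] {s : S} {a : A} (ha : M.Enabled s a) {f g : S → ℝ}
    {c : ℝ} (h : ∀ s', |f s' - g s'| ≤ c) :
    |∑ s', M.P s a s' * f s' - ∑ s', M.P s a s' * g s'| ≤ c := by
  simp only [← Finset.sum_sub_distrib, ← mul_sub]
  refine abs_le.2 ⟨?_, M.sum_P_mul_le ha fun s' => (abs_le.1 (h s')).2⟩
  have := M.sum_P_mul_le ha (f := fun s' => g s' - f s') fun s' => by
    linarith [(abs_le.1 (h s')).1]
  simp only [mul_sub, Finset.sum_sub_distrib] at this ⊢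
  linarith

section FiniteActions

variable [Fintype A]

lemma Scheduler.sum_act (σ : Scheduler M) (p : FPath S A) : ∑ a, σ.act p a = 1 := by
  simpa only [tsum_fintype] using σ.sum_one p

def enabledActions (M : MDP S A) (s : S) : Finset A := {a | M.Enabled s a}

@[simp]
lemma mem_enabledActions {s : S} {a : A} : a ∈ enabledActions M s ↔ M.Enabled s a := by
  simp [enabledActions]

lemma enabledActions_nonempty (M : MDP S A) (s : S) : (enabledActions M s).Nonempty :=
  let ⟨a, ha⟩ := M.exists_enabled s
  ⟨a, mem_enabledActions.2 ha⟩

def Scheduler.ofChoice (b : FPath S A → A) (hb : ∀ p, M.Enabled (fpLast p) (b p)) :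
    Scheduler M where
  act p a := if a = b p then 1 else 0
  nonneg p a := by split <;> norm_num
  sum_one p := by simp [tsum_fintype]
  not_enabled p a h := if_neg fun (hab : a = b p) => h (hab ▸ hb p)

variable (σ₀ σ₁ : Scheduler M) {t : ℝ} (ht₀ : 0 ≤ t) (ht₁ : t ≤ 1)

def Scheduler.mix : Scheduler M where
  act p a := if mixWeight σ₀ σ₁ t p = 0 then σ₀.act p a else
    ((1 - t) * pathWeight σ₀ p * σ₀.act p a + t * pathWeight σ₁ p * σ₁.act p a) /
      mixWeight σ₀ σ₁ t p
  nonneg p a := by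
    split
    · exact σ₀.nonneg p a
    · have := sub_nonneg.2 ht₁
      have := pathWeight_nonneg σ₀ p
      have := pathWeight_nonneg σ₁ p
      have := σ₀.nonneg p a
      have := σ₁.nonneg p a
      unfold mixWeight
      positivity
  sum_one p := by
    rw [tsum_fintype]
    split
    · exact σ₀.sum_act p
    · rw [← Finset.sum_div, Finset.sum_add_distrib, ← Finset.mul_sum, ← Finset.mul_sum,
        σ₀.sum_act, σ₁.sum_act, mul_one, mul_one]
      exact div_self ‹_›
  not_enabled p a ha := by simp [σ₀.not_enabled p a ha, σ₁.not_enabled p a ha]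

lemma mixWeight_fpExt (p : FPath S A) (a : A) (s' : S) :
    mixWeight σ₀ σ₁ t (fpExt p a s') =
      mixWeight σ₀ σ₁ t p * (Scheduler.mix σ₀ σ₁ ht₀ ht₁).act p a := by
  have hext : mixWeight σ₀ σ₁ t (fpExt p a s') =
      (1 - t) * pathWeight σ₀ p * σ₀.act p a + t * pathWeight σ₁ p * σ₁.act p a := by
    simp only [mixWeight, pathWeight_fpExt, mul_assoc]
  show _ = mixWeight σ₀ σ₁ t p * ite _ _ _
  split_ifs with h
  · obtain ⟨h₀, h₁⟩ := (add_eq_zero_iff_of_nonneg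
      (mul_nonneg (sub_nonneg.2 ht₁) (pathWeight_nonneg σ₀ p))
      (mul_nonneg ht₀ (pathWeight_nonneg σ₁ p))).1 h
    simp [hext, h, h₀, h₁]
  · rw [hext, mul_div_cancel₀ _ h]

end FiniteActions

variable [Fintype S] [Fintype A]

section StepExp

variable (σ : Scheduler M) (p : FPath S A)

lemma stepExp_eq_sum (g : FPath S A → ℝ) :
    stepExp M σ p g = ∑ a, σ.act p a * ∑ s', M.P (fpLast p) a s' * g (fpExt p a s') := by
  simp only [stepExp, tsum_fintype, Finset.mul_sum, mul_assoc]

lemma stepExp_mono {g h : FPath S A → ℝ} (hgh : ∀ p', g p' ≤ h p') :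
    stepExp M σ p g ≤ stepExp M σ p h := by
  simp only [stepExp_eq_sum]
  gcongr with a _ s' _
  · exact σ.nonneg p a
  · exact M.nonneg _ _ _
  · exact hgh _

lemma stepExp_const_mul (c : ℝ) (g : FPath S A → ℝ) :
    stepExp M σ p (fun p' => c * g p') = c * stepExp M σ p g := by
  simp only [stepExp_eq_sum, Finset.mul_sum]
  exact Finset.sum_congr rfl fun _ _ => Finset.sum_congr rfl fun _ _ => by ring

lemma stepExp_zero : stepExp M σ p (fun _ => 0) = 0 := by
  simpa using stepExp_const_mul σ p 0 (fun _ => 0)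

lemma stepExp_nonneg {g : FPath S A → ℝ} (hg : ∀ p', 0 ≤ g p') : 0 ≤ stepExp M σ p g :=
  stepExp_zero σ p ▸ stepExp_mono σ p hg

lemma stepExp_finsetSum {ι : Type} (I : Finset ι) (g : ι → FPath S A → ℝ) :
    stepExp M σ p (fun p' => ∑ i ∈ I, g i p') = ∑ i ∈ I, stepExp M σ p (g i) := by
  simp only [stepExp, Finset.mul_sum]
  rw [← Summable.tsum_finsetSum fun _ _ => by exact (hasSum_fintype _).summable]
  refine tsum_congr fun a => ?_
  rw [← Summable.tsum_finsetSum fun _ _ => by exact (hasSum_fintype _).summable]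

lemma stepExp_le_of_forall_enabled {g : FPath S A → ℝ} {c : ℝ}
    (h : ∀ a, M.Enabled (fpLast p) a → ∑ s', M.P (fpLast p) a s' * g (fpExt p a s') ≤ c) :
    stepExp M σ p g ≤ c := by
  rw [stepExp_eq_sum]
  calc _ ≤ ∑ a, σ.act p a * c := by
        refine Finset.sum_le_sum fun a _ => ?_
        by_cases ha : M.Enabled (fpLast p) a
        · exact mul_le_mul_of_nonneg_left (h a ha) (σ.nonneg p a)
        · simp [σ.not_enabled p a ha]
    _ = c := by rw [← Finset.sum_mul, σ.sum_act, one_mul]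

end StepExp

section Reach

variable (σ : Scheduler M) (T : Set S)

lemma reachN_nonneg : ∀ n p, 0 ≤ reachN M σ T n p
  | 0, p => by unfold reachN; split <;> norm_num
  | n + 1, p => by
    unfold reachN; split
    · norm_num
    · exact stepExp_nonneg σ p (reachN_nonneg n)

lemma reachN_le_one : ∀ n p, reachN M σ T n p ≤ 1
  | 0, p => by unfold reachN; split <;> norm_num
  | n + 1, p => by
    unfold reachN; split
    · rfl
    · exact stepExp_le_of_forall_enabled σ p fun a ha =>
        M.sum_P_mul_le ha fun s' => reachN_le_one n _

lemma reachN_le_succ : ∀ n p, reachN M σ T n p ≤ reachN M σ T (n + 1) p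
  | 0, p => by
    unfold reachN; split
    · rfl
    · exact stepExp_nonneg σ p (reachN_nonneg σ T 0)
  | n + 1, p => by
    unfold reachN; split
    · rfl
    · exact stepExp_mono σ p (reachN_le_succ n)

lemma bddAbove_range_reachN (p : FPath S A) : BddAbove (Set.range fun n => reachN M σ T n p) :=
  ⟨1, by rintro _ ⟨n, rfl⟩; exact reachN_le_one σ T n p⟩

lemma tendsto_reachN_reachProb (s : S) :
    Tendsto (fun n => reachN M σ T n (s, [])) atTop (𝓝 (reachProb M σ s T)) :=
  tendsto_atTop_ciSup (monotone_nat_of_le_succ fun n => reachN_le_succ σ T n _)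
    (bddAbove_range_reachN σ T _)

lemma reachN_le_reachProb (n : ℕ) (s : S) : reachN M σ T n (s, []) ≤ reachProb M σ s T :=
  le_ciSup (bddAbove_range_reachN σ T _) n

variable {γ : ℝ}

lemma discReachN_nonneg (hγ₀ : 0 ≤ γ) : ∀ n p, 0 ≤ discReachN σ T γ n p
  | 0, p => by unfold discReachN; split <;> norm_num
  | n + 1, p => by
    unfold discReachN; split
    · norm_num
    · exact mul_nonneg hγ₀ (stepExp_nonneg σ p (discReachN_nonneg hγ₀ n))

lemma discReachN_le_succ (hγ₀ : 0 ≤ γ) : ∀ n p, discReachN σ T γ n p ≤ discReachN σ T γ (n + 1) p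
  | 0, p => by
    unfold discReachN; split
    · rfl
    · exact mul_nonneg hγ₀ (stepExp_nonneg σ p (discReachN_nonneg σ T hγ₀ 0))
  | n + 1, p => by
    unfold discReachN; split
    · rfl
    · exact mul_le_mul_of_nonneg_left (stepExp_mono σ p (discReachN_le_succ hγ₀ n)) hγ₀

lemma discReachN_le_reachN (hγ₀ : 0 ≤ γ) (hγ₁ : γ ≤ 1) :
    ∀ n p, discReachN σ T γ n p ≤ reachN M σ T n p
  | 0, p => le_rfl
  | n + 1, p => by
    unfold discReachN reachN; split
    · rfl
    · calc _ ≤ 1 * stepExp M σ p (discReachN σ T γ n) := by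
            gcongr
            exact stepExp_nonneg σ p (discReachN_nonneg σ T hγ₀ n)
        _ ≤ _ := by
            rw [one_mul]
            exact stepExp_mono σ p (discReachN_le_reachN hγ₀ hγ₁ n)

lemma pow_mul_reachN_le_discReachN (hγ₀ : 0 ≤ γ) (hγ₁ : γ ≤ 1) :
    ∀ n p, γ ^ n * reachN M σ T n p ≤ discReachN σ T γ n p
  | 0, p => by simp [reachN, discReachN]
  | n + 1, p => by
    unfold reachN discReachN; split
    · simpa using pow_le_one₀ hγ₀ hγ₁
    · rw [pow_succ', mul_assoc, ← stepExp_const_mul]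
      exact mul_le_mul_of_nonneg_left
        (stepExp_mono σ p (pow_mul_reachN_le_discReachN hγ₀ hγ₁ n)) hγ₀

lemma bddAbove_range_discReachN (hγ₀ : 0 ≤ γ) (hγ₁ : γ ≤ 1) (p : FPath S A) :
    BddAbove (Set.range fun n => discReachN σ T γ n p) :=
  ⟨1, by
    rintro _ ⟨n, rfl⟩
    exact (discReachN_le_reachN σ T hγ₀ hγ₁ n p).trans (reachN_le_one σ T n p)⟩

lemma tendsto_discReachN (hγ₀ : 0 ≤ γ) (hγ₁ : γ ≤ 1) (p : FPath S A) :
    Tendsto (fun n => discReachN σ T γ n p) atTop (𝓝 (discReach σ T γ p)) :=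
  tendsto_atTop_ciSup (monotone_nat_of_le_succ fun n => discReachN_le_succ σ T hγ₀ n p)
    (bddAbove_range_discReachN σ T hγ₀ hγ₁ p)

lemma tendsto_discReach_reachProb {ι : Type} {l : Filter ι} {γ : ι → ℝ}
    (hγ₀ : ∀ᶠ i in l, 0 ≤ γ i) (hγ₁ : ∀ᶠ i in l, γ i ≤ 1) (hγ : Tendsto γ l (𝓝 1)) (s : S) :
    Tendsto (fun i => discReach σ T (γ i) (s, [])) l (𝓝 (reachProb M σ s T)) := by
  refine tendsto_order.2 ⟨fun b hb => ?_, fun b hb => ?_⟩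
  · obtain ⟨n, hn⟩ := exists_lt_of_lt_ciSup hb
    have hpow : Tendsto (fun i => γ i ^ n * reachN M σ T n (s, [])) l
        (𝓝 (reachN M σ T n (s, []))) := by
      simpa using (hγ.pow n).mul_const (reachN M σ T n (s, []))
    filter_upwards [hpow.eventually (lt_mem_nhds hn), hγ₀, hγ₁] with i hi h₀ h₁
    exact hi.trans_le <| (pow_mul_reachN_le_discReachN σ T h₀ h₁ n _).trans
      (le_ciSup (bddAbove_range_discReachN σ T h₀ h₁ _) n)
  · filter_upwards [hγ₀, hγ₁] with i h₀ h₁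
    exact lt_of_le_of_lt (ciSup_le fun n =>
      (discReachN_le_reachN σ T h₀ h₁ n _).trans (reachN_le_reachProb σ T n s)) hb

end Reach

section Bellman

variable {ι : Type} (T : ι → Set S) (q : ι → ℝ)

lemma tendsto_discValueN (σ : Scheduler M) {γ : ℝ} (hγ₀ : 0 ≤ γ) (hγ₁ : γ ≤ 1) (J : Finset ι)
    (p : FPath S A) :
    Tendsto (fun n => discValueN T q σ γ n J p) atTop (𝓝 (discValue T q σ γ J p)) :=
  tendsto_finsetSum J fun i _ => (tendsto_discReachN σ (T i) hγ₀ hγ₁ p).const_mul (q i)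

variable [Fintype ι]

lemma discValueN_succ (σ : Scheduler M) (γ : ℝ) (n : ℕ) (J : Finset ι) (p : FPath S A) :
    discValueN T q σ γ (n + 1) J p = ∑ i ∈ J ∩ hitSet T (fpLast p), q i +
      γ * stepExp M σ p (discValueN T q σ γ n (J \ hitSet T (fpLast p))) := by
  rw [discValueN, ← Finset.sum_inter_add_sum_sdiff J (hitSet T (fpLast p))]
  congr 1
  · refine Finset.sum_congr rfl fun i hi => ?_
    simp_all [discReachN, hitSet]
  · unfold discValueN
    simp only [stepExp_finsetSum, stepExp_const_mul, Finset.mul_sum]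
    refine Finset.sum_congr rfl fun i hi => ?_
    have hi : fpLast p ∉ T i := by simpa [hitSet] using (Finset.mem_sdiff.1 hi).2
    rw [discReachN, if_neg hi]
    ring

def qValue (M : MDP S A) (x : Finset ι × S → ℝ) (K : Finset ι) (s : S) (a : A) : ℝ :=
  ∑ s', M.P s a s' * x (K, s')

/-- In `c = (J, s)`, `J` is the set of targets still pending on arrival in `s`. -/
def bellman (M : MDP S A) (γ : ℝ) (x : Finset ι × S → ℝ) (c : Finset ι × S) : ℝ :=
  ∑ i ∈ c.1 ∩ hitSet T c.2, q i + γ * (enabledActions M c.2).sup' (enabledActions_nonempty M c.2)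
    (qValue M x (c.1 \ hitSet T c.2) c.2)

lemma dist_bellman_le {γ : ℝ} (hγ₀ : 0 ≤ γ) (x y : Finset ι × S → ℝ) :
    dist (bellman T q M γ x) (bellman T q M γ y) ≤ γ * dist x y := by
  refine (dist_pi_le_iff (mul_nonneg hγ₀ dist_nonneg)).2 fun c => ?_
  rw [Real.dist_eq, bellman, bellman, add_sub_add_left_eq_sub, ← mul_sub, abs_mul,
    abs_of_nonneg hγ₀]
  refine mul_le_mul_of_nonneg_left (Finset.abs_sup'_sub_sup'_le _ fun a ha => ?_) hγ₀
  refine MDP.abs_sum_P_mul_sub_le (mem_enabledActions.1 ha) fun s' => ?_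
  exact (Real.dist_eq _ _).symm.trans_le (dist_le_pi_dist x y _)

lemma exists_isFixedPt_bellman {γ : ℝ} (hγ₀ : 0 ≤ γ) (hγ₁ : γ < 1) :
    ∃ x, Function.IsFixedPt (bellman T q M γ) x := by
  have hK : ContractingWith ⟨γ, hγ₀⟩ (bellman T q M γ) :=
    ⟨hγ₁, LipschitzWith.of_dist_le_mul (dist_bellman_le T q hγ₀)⟩
  exact ⟨_, ContractingWith.fixedPoint_isFixedPt hK⟩

variable {γ : ℝ} {x : Finset ι × S → ℝ} {C : ℝ}

lemma discValueN_le_of_isFixedPt (σ : Scheduler M) (hγ₀ : 0 ≤ γ)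
    (hx : Function.IsFixedPt (bellman T q M γ) x)
    (hC : ∀ J s, |∑ i ∈ J ∩ hitSet T s, q i - x (J, s)| ≤ C) :
    ∀ n J p, discValueN T q σ γ n J p ≤ x (J, fpLast p) + γ ^ n * C
  | 0, J, p => by
    rw [discValueN_zero, pow_zero, one_mul]
    linarith [(abs_le.1 (hC J (fpLast p))).2]
  | n + 1, J, p => by
    set K := J \ hitSet T (fpLast p)
    have hstep : stepExp M σ p (discValueN T q σ γ n K) ≤
        (enabledActions M (fpLast p)).sup' (enabledActions_nonempty M _)
          (qValue M x K (fpLast p)) + γ ^ n * C := by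
      refine stepExp_le_of_forall_enabled σ p fun a ha => ?_
      calc _ ≤ ∑ s', M.P (fpLast p) a s' * (x (K, s') + γ ^ n * C) := by
            gcongr with s'
            · exact M.nonneg _ _ _
            · simpa using discValueN_le_of_isFixedPt σ hγ₀ hx hC n K (fpExt p a s')
        _ = qValue M x K (fpLast p) a + γ ^ n * C := M.sum_P_mul_add ha _ _
        _ ≤ _ := by
            gcongr
            exact Finset.le_sup' _ (mem_enabledActions.2 ha)
    rw [discValueN_succ, ← hx, bellman]
    calc _ ≤ ∑ i ∈ J ∩ hitSet T (fpLast p), q i + γ * ((enabledActions M (fpLast p)).sup'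
          (enabledActions_nonempty M _) (qValue M x K (fpLast p)) + γ ^ n * C) := by gcongr
      _ = _ := by ring

end Bellman

section PendingScheduler

lemma stepExp_ofChoice (b : FPath S A → A) (hb : ∀ p, M.Enabled (fpLast p) (b p))
    (p : FPath S A) (g : FPath S A → ℝ) :
    stepExp M (Scheduler.ofChoice b hb) p g =
      ∑ s', M.P (fpLast p) (b p) s' * g (fpExt p (b p) s') := by
  simp [stepExp_eq_sum, Scheduler.ofChoice]

variable {ι : Type} [Fintype ι] (T : ι → Set S) (q : ι → ℝ)

def pendingSched (J₀ : S → Finset ι) (b : Finset ι × S → A)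
    (hb : ∀ c, M.Enabled c.2 (b c)) : Scheduler M :=
  Scheduler.ofChoice (fun p => b (pending T (J₀ p.1) p, fpLast p)) fun p => hb (_, fpLast p)

variable {γ : ℝ} {x : Finset ι × S → ℝ} {C : ℝ} (J₀ : S → Finset ι) {b : Finset ι × S → A}
  (hb : ∀ c, M.Enabled c.2 (b c))

lemma abs_discValueN_pendingSched_sub_le (hγ₀ : 0 ≤ γ)
    (hx : Function.IsFixedPt (bellman T q M γ) x)
    (hbx : ∀ K s, qValue M x K s (b (K, s)) =
      (enabledActions M s).sup' (enabledActions_nonempty M s) (qValue M x K s))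
    (hC : ∀ J s, |∑ i ∈ J ∩ hitSet T s, q i - x (J, s)| ≤ C) :
    ∀ n p J, J \ hitSet T (fpLast p) = pending T (J₀ p.1) p →
      |discValueN T q (pendingSched T J₀ b hb) γ n J p - x (J, fpLast p)| ≤ γ ^ n * C
  | 0, p, J, _ => by simpa [discValueN_zero] using hC J (fpLast p)
  | n + 1, p, J, hJ => by
    set K := J \ hitSet T (fpLast p)
    set a := b (K, fpLast p)
    have hval : x (J, fpLast p) =
        ∑ i ∈ J ∩ hitSet T (fpLast p), q i + γ * ∑ s', M.P (fpLast p) a s' * x (K, s') := by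
      conv_lhs => rw [← hx]
      rw [bellman, ← hbx]
      rfl
    rw [discValueN_succ, hval, pendingSched, stepExp_ofChoice, ← hJ, add_sub_add_left_eq_sub,
      ← mul_sub, abs_mul, abs_of_nonneg hγ₀, pow_succ', mul_assoc]
    refine mul_le_mul_of_nonneg_left
      (MDP.abs_sum_P_mul_sub_le (hb (K, fpLast p)) fun s' => ?_) hγ₀
    have := abs_discValueN_pendingSched_sub_le hγ₀ hx hbx hC n (fpExt p a s') K
      (by rw [fpLast_fpExt, pending_fpExt]; exact congrArg (· \ hitSet T s') hJ)
    rwa [fpLast_fpExt] at this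

end PendingScheduler

section Optimum

variable {ι : Type} [Fintype ι] (T : ι → Set S) (q : ι → ℝ)

lemma exists_pendingSched_discValue_ge {γ : ℝ} (hγ₀ : 0 ≤ γ) (hγ₁ : γ < 1)
    (J₀ : S → Finset ι) :
    ∃ (b : Finset ι × S → A) (hb : ∀ c, M.Enabled c.2 (b c)), ∀ (σ : Scheduler M) (s : S),
      discValue T q σ γ (J₀ s) (s, []) ≤
        discValue T q (pendingSched T J₀ b hb) γ (J₀ s) (s, []) := by
  obtain ⟨x, hx⟩ := exists_isFixedPt_bellman T q (M := M) hγ₀ hγ₁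
  choose b hbmem hbx using fun c : Finset ι × S =>
    Finset.exists_mem_eq_sup' (enabledActions_nonempty M c.2) (qValue M x c.1 c.2)
  have hb : ∀ c, M.Enabled c.2 (b c) := fun c => mem_enabledActions.1 (hbmem c)
  obtain ⟨C, hC⟩ :=
    Finite.exists_le fun c : Finset ι × S => |∑ i ∈ c.1 ∩ hitSet T c.2, q i - x c|
  have hγ : Tendsto (fun n => γ ^ n * C) atTop (𝓝 0) := by
    simpa using (tendsto_pow_atTop_nhds_zero_of_lt_one hγ₀ hγ₁).mul_const C
  refine ⟨b, hb, fun σ s => ?_⟩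
  have hle : discValue T q σ γ (J₀ s) (s, []) ≤ x (J₀ s, s) :=
    le_of_tendsto_of_tendsto' (tendsto_discValueN T q σ hγ₀ hγ₁.le _ _)
      (by simpa using hγ.const_add (x (J₀ s, s)))
      fun n => discValueN_le_of_isFixedPt T q σ hγ₀ hx (fun J s => hC (J, s)) n _ _
  have heq : discValue T q (pendingSched T J₀ b hb) γ (J₀ s) (s, []) = x (J₀ s, s) := by
    refine tendsto_nhds_unique (tendsto_discValueN T q _ hγ₀ hγ₁.le _ _) ?_
    refine tendsto_iff_dist_tendsto_zero.2 (squeeze_zero (fun _ => dist_nonneg) (fun n => ?_) hγ)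
    exact abs_discValueN_pendingSched_sub_le T q J₀ hb hγ₀ hx (fun K s => (hbx (K, s)).symm)
      (fun J s => hC (J, s)) n (s, []) (J₀ s) (pending_nil T _ s).symm
  exact hle.trans heq.ge

theorem exists_max_sum_reachProb (st : ι → S) :
    ∃ τ : Scheduler M, ∀ σ : Scheduler M,
      ∑ i, q i * reachProb M σ (st i) (T i) ≤ ∑ i, q i * reachProb M τ (st i) (T i) := by
  set J₀ : S → Finset ι := fun s => {i | st i = s}
  have hsplit : ∀ (σ : Scheduler M) γ, ∑ i, q i * discReach σ (T i) γ (st i, []) =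
      ∑ s, discValue T q σ γ (J₀ s) (s, []) := by
    intro σ γ
    rw [← Finset.sum_fiberwise Finset.univ st]
    refine Finset.sum_congr rfl fun s _ => Finset.sum_congr rfl fun i hi => ?_
    rw [(Finset.mem_filter.1 hi).2]
  have hlim : ∀ σ : Scheduler M, Tendsto (fun γ => ∑ i, q i * discReach σ (T i) γ (st i, []))
      (𝓝[<] 1) (𝓝 (∑ i, q i * reachProb M σ (st i) (T i))) := fun σ =>
    tendsto_finsetSum _ fun i _ => (tendsto_discReach_reachProb σ (T i)
      (eventually_nhdsWithin_of_eventually_nhds (eventually_ge_nhds zero_lt_one))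
      (eventually_nhdsWithin_of_forall fun _ h => le_of_lt h)
      nhdsWithin_le_nhds (st i)).const_mul (q i)
  have hopt : ∀ᶠ γ in 𝓝[<] (1 : ℝ), ∃ b : {b : Finset ι × S → A // ∀ c, M.Enabled c.2 (b c)},
      ∀ σ : Scheduler M, ∑ i, q i * discReach σ (T i) γ (st i, []) ≤
        ∑ i, q i * discReach (pendingSched T J₀ b.1 b.2) (T i) γ (st i, []) := by
    filter_upwards [Ico_mem_nhdsLT zero_lt_one] with γ hγ
    obtain ⟨b, hb, hb_opt⟩ := exists_pendingSched_discValue_ge (M := M) T q hγ.1 hγ.2 J₀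
    exact ⟨⟨b, hb⟩, fun σ => by
      simpa only [hsplit] using Finset.sum_le_sum fun s _ => hb_opt σ s⟩
  obtain ⟨b, hb⟩ := Filter.frequently_exists.1 hopt.frequently
  exact ⟨_, fun σ => le_of_tendsto_of_tendsto_of_frequently (hlim σ) (hlim _)
    (hb.mono fun _ h => h σ)⟩

end Optimum

section Mixture

variable {σ₀ σ₁ : Scheduler M} {t : ℝ} (ht₀ : 0 ≤ t) (ht₁ : t ≤ 1)

lemma mixWeight_mul_stepExp_mix {g g₀ g₁ : FPath S A → ℝ}
    (h : ∀ p, mixWeight σ₀ σ₁ t p * g p =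
      (1 - t) * pathWeight σ₀ p * g₀ p + t * pathWeight σ₁ p * g₁ p) (p : FPath S A) :
    mixWeight σ₀ σ₁ t p * stepExp M (Scheduler.mix σ₀ σ₁ ht₀ ht₁) p g =
      (1 - t) * pathWeight σ₀ p * stepExp M σ₀ p g₀ +
        t * pathWeight σ₁ p * stepExp M σ₁ p g₁ := by
  simp only [stepExp_eq_sum, Finset.mul_sum, ← Finset.sum_add_distrib]
  refine Finset.sum_congr rfl fun a _ => Finset.sum_congr rfl fun s' _ => ?_
  calc _ = M.P (fpLast p) a s' * (mixWeight σ₀ σ₁ t (fpExt p a s') * g (fpExt p a s')) := by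
        rw [mixWeight_fpExt σ₀ σ₁ ht₀ ht₁]; ring
    _ = _ := by rw [h, pathWeight_fpExt, pathWeight_fpExt]; ring

lemma mixWeight_mul_reachN_mix (T : Set S) : ∀ n p,
    mixWeight σ₀ σ₁ t p * reachN M (Scheduler.mix σ₀ σ₁ ht₀ ht₁) T n p =
      (1 - t) * pathWeight σ₀ p * reachN M σ₀ T n p + t * pathWeight σ₁ p * reachN M σ₁ T n p
  | 0, p => by unfold reachN; split <;> simp [mixWeight]
  | n + 1, p => by
    unfold reachN; split
    · simp [mixWeight]
    · exact mixWeight_mul_stepExp_mix ht₀ ht₁ (mixWeight_mul_reachN_mix T n) p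

lemma reachProb_mix (T : Set S) (s : S) :
    reachProb M (Scheduler.mix σ₀ σ₁ ht₀ ht₁) s T =
      (1 - t) * reachProb M σ₀ s T + t * reachProb M σ₁ s T := by
  have h : ∀ n, reachN M (Scheduler.mix σ₀ σ₁ ht₀ ht₁) T n (s, []) =
      (1 - t) * reachN M σ₀ T n (s, []) + t * reachN M σ₁ T n (s, []) := fun n => by
    simpa [mixWeight] using mixWeight_mul_reachN_mix ht₀ ht₁ T n (s, [])
  refine tendsto_nhds_unique (tendsto_reachN_reachProb _ T s) ?_
  simpa only [h] using ((tendsto_reachN_reachProb σ₀ T s).const_mul (1 - t)).add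
    ((tendsto_reachN_reachProb σ₁ T s).const_mul t)

end Mixture

section Tuples

variable {ι κ : Type} [Fintype ι] (q : ι → ℝ) (st : ι → S) (T : ι → Set S)
  (k : ι → κ)

lemma sum_reachProb_comp_mix (σ₀ σ₁ : κ → Scheduler M) {t : ℝ} (ht₀ : 0 ≤ t) (ht₁ : t ≤ 1) :
    ∑ i, q i * reachProb M (Scheduler.mix (σ₀ (k i)) (σ₁ (k i)) ht₀ ht₁) (st i) (T i) =
      (1 - t) * ∑ i, q i * reachProb M (σ₀ (k i)) (st i) (T i) +
        t * ∑ i, q i * reachProb M (σ₁ (k i)) (st i) (T i) := by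
  simp only [reachProb_mix, Finset.mul_sum, ← Finset.sum_add_distrib]
  exact Finset.sum_congr rfl fun i _ => by ring

lemma Icc_subset_range_sum_reachProb_comp (σ₀ σ₁ : κ → Scheduler M) :
    Set.Icc (∑ i, q i * reachProb M (σ₀ (k i)) (st i) (T i))
        (∑ i, q i * reachProb M (σ₁ (k i)) (st i) (T i)) ⊆
      Set.range fun σ : κ → Scheduler M => ∑ i, q i * reachProb M (σ (k i)) (st i) (T i) := by
  intro y hy
  rw [← segment_eq_Icc (hy.1.trans hy.2), segment_eq_image] at hy
  obtain ⟨t, ⟨ht₀, ht₁⟩, rfl⟩ := hy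
  exact ⟨fun j => Scheduler.mix (σ₀ j) (σ₁ j) ht₀ ht₁,
    sum_reachProb_comp_mix q st T k σ₀ σ₁ ht₀ ht₁⟩

variable [Fintype κ]

theorem exists_max_sum_reachProb_comp :
    ∃ τ : κ → Scheduler M, ∀ σ : κ → Scheduler M,
      ∑ i, q i * reachProb M (σ (k i)) (st i) (T i) ≤
        ∑ i, q i * reachProb M (τ (k i)) (st i) (T i) := by
  choose τ hτ using fun j => exists_max_sum_reachProb (M := M)
    (fun i : {i // k i = j} => T i) (fun i => q i) (fun i => st i)
  have hfib : ∀ σ : κ → Scheduler M, ∑ i, q i * reachProb M (σ (k i)) (st i) (T i) =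
      ∑ j, ∑ i : {i // k i = j}, q i * reachProb M (σ j) (st i) (T i) := fun σ => by
    rw [← Fintype.sum_fiberwise k]
    exact Finset.sum_congr rfl fun j _ => Finset.sum_congr rfl fun i _ => by rw [i.2]
  exact ⟨τ, fun σ => by simpa only [hfib] using Finset.sum_le_sum fun j _ => hτ j (σ j)⟩

theorem exists_min_sum_reachProb_comp :
    ∃ τ : κ → Scheduler M, ∀ σ : κ → Scheduler M,
      ∑ i, q i * reachProb M (τ (k i)) (st i) (T i) ≤
        ∑ i, q i * reachProb M (σ (k i)) (st i) (T i) := by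
  simpa [neg_mul] using exists_max_sum_reachProb_comp (M := M) (-q) st T k

end Tuples

end

theorem relReach_approx_equality_iff_between_extrema_general
    {S A : Type} [Finite S] [Finite A]
    (M : MDP S A) (m n : ℕ)
    (qc : Fin m → ℚ) (q : ℚ) (st : Fin m → S)
    (k : Fin m → Fin n)
    (T : Fin m → Set S) :
    (∃ σ : Fin n → Scheduler M,
        (∑ i : Fin m, (qc i : ℝ) * reachProb M (σ (k i)) (st i) (T i)) =
          ⨆ σ' : Fin n → Scheduler M,
            ∑ i : Fin m, (qc i : ℝ) * reachProb M (σ' (k i)) (st i) (T i)) ∧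
    (∃ σ : Fin n → Scheduler M,
        (∑ i : Fin m, (qc i : ℝ) * reachProb M (σ (k i)) (st i) (T i)) =
          ⨅ σ' : Fin n → Scheduler M,
            ∑ i : Fin m, (qc i : ℝ) * reachProb M (σ' (k i)) (st i) (T i)) ∧
    (∀ ε : ℚ, 0 ≤ ε →
      ((∃ σ : Fin n → Scheduler M,
          |(∑ i : Fin m, (qc i : ℝ) * reachProb M (σ (k i)) (st i) (T i)) - (q : ℝ)| ≤ (ε : ℝ)) ↔
        ((⨅ σ' : Fin n → Scheduler M,
            ∑ i : Fin m, (qc i : ℝ) * reachProb M (σ' (k i)) (st i) (T i)) - (ε : ℝ) ≤ (q : ℝ) ∧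
          (q : ℝ) ≤ (⨆ σ' : Fin n → Scheduler M,
            ∑ i : Fin m, (qc i : ℝ) * reachProb M (σ' (k i)) (st i) (T i)) + (ε : ℝ)))) := by
  have := Fintype.ofFinite S
  have := Fintype.ofFinite A
  set F : (Fin n → Scheduler M) → ℝ :=
    fun σ => ∑ i, (qc i : ℝ) * reachProb M (σ (k i)) (st i) (T i)
  obtain ⟨σmax, hmax⟩ := exists_max_sum_reachProb_comp (M := M) (fun i => (qc i : ℝ)) st T k
  obtain ⟨σmin, hmin⟩ := exists_min_sum_reachProb_comp (M := M) (fun i => (qc i : ℝ)) st T k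
  have hsup : F σmax = ⨆ σ, F σ := (IsGreatest.csSup_eq (s := Set.range F)
    ⟨⟨σmax, rfl⟩, by rintro _ ⟨σ, rfl⟩; exact hmax σ⟩).symm
  have hinf : F σmin = ⨅ σ, F σ := (IsLeast.csInf_eq (s := Set.range F)
    ⟨⟨σmin, rfl⟩, by rintro _ ⟨σ, rfl⟩; exact hmin σ⟩).symm
  refine ⟨⟨σmax, hsup⟩, ⟨σmin, hinf⟩, fun ε hε => ?_⟩
  rw [← hsup, ← hinf]
  exact exists_abs_sub_le_iff_of_Icc_subset_range F hmin hmax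
    (Icc_subset_range_sum_reachProb_comp _ st T k σmin σmax) (by exact_mod_cast hε)

theorem relReach_approx_equality_iff_between_extrema
    {S A : Type} [Finite S] [Nonempty S] [Finite A] [Nonempty A]
    (M : MDP S A) (m n : ℕ) (hm : 1 ≤ m)
    (qc : Fin m → ℚ) (q : ℚ) (st : Fin m → S)
    (k : Fin m → Fin n) (hk : Function.Surjective k)
    (T : Fin m → Set S) :
    (∃ σ : Fin n → Scheduler M,
        (∑ i : Fin m, (qc i : ℝ) * reachProb M (σ (k i)) (st i) (T i)) =
          ⨆ σ' : Fin n → Scheduler M,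
            ∑ i : Fin m, (qc i : ℝ) * reachProb M (σ' (k i)) (st i) (T i)) ∧
    (∃ σ : Fin n → Scheduler M,
        (∑ i : Fin m, (qc i : ℝ) * reachProb M (σ (k i)) (st i) (T i)) =
          ⨅ σ' : Fin n → Scheduler M,
            ∑ i : Fin m, (qc i : ℝ) * reachProb M (σ' (k i)) (st i) (T i)) ∧
    (∀ ε : ℚ, 0 ≤ ε →
      ((∃ σ : Fin n → Scheduler M,
          |(∑ i : Fin m, (qc i : ℝ) * reachProb M (σ (k i)) (st i) (T i)) - (q : ℝ)| ≤ (ε : ℝ)) ↔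
        ((⨅ σ' : Fin n → Scheduler M,
            ∑ i : Fin m, (qc i : ℝ) * reachProb M (σ' (k i)) (st i) (T i)) - (ε : ℝ) ≤ (q : ℝ) ∧
          (q : ℝ) ≤ (⨆ σ' : Fin n → Scheduler M,
            ∑ i : Fin m, (qc i : ℝ) * reachProb M (σ' (k i)) (st i) (T i)) + (ε : ℝ)))) :=
  relReach_approx_equality_iff_between_extrema_general M m n qc q st k T
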